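/- arXiv:math/0009087 — 5 statements merged into one kernel-verified Lean document; each statement's English description precedes it below -/
import Mathlib

section
/- If a complete first-order theory T has SOP₃, then T has SOP₂. -/
open FirstOrder FirstOrder.Language

universe u v w

namespace Sh692

variable {L : FirstOrder.Language.{u, v}}

/-- The restriction `η↾k` of an infinite binary sequence, as a finite binary sequence. -/
def restr (η : ℕ → Fin 2) (k : ℕ) : List (Fin 2) := List.ofFn fun i : Fin k => η i

/-- `a` is an (order-)indiscernible sequence of `m`-tuples in `M`. -/
def IsIndiscernibleSeq (L : FirstOrder.Language.{u, v}) {M : Type w} [L.Structure M] {m : ℕ}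
    (a : ℕ → Fin m → M) : Prop :=
  ∀ (k : ℕ) (ψ : L.Formula (Fin k × Fin m)) (i j : Fin k → ℕ),
    StrictMono i → StrictMono j →
      (ψ.Realize (fun q => a (i q.1) q.2) ↔ ψ.Realize (fun q => a (j q.1) q.2))

/-- `T` has SOP₃: in a (monster) model of `T` there are an indiscernible sequence `(ā_i)`,
formulas `φ, ψ` and tuples `(b̄_j)` with (a) `{φ, ψ}` contradictory, (b) `i ≤ j` implies
`⊨ φ[b̄_j, ā_i]` and `i > j` implies `⊨ ψ[b̄_j, ā_i]`, and (c) for `i < j`,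
`{φ(x̄, ā_j), ψ(x̄, ā_i)}` is contradictory. -/
def HasSOP3 (T : L.Theory) : Prop :=
  ∃ (p m : ℕ) (φ ψ : L.Formula (Fin p ⊕ Fin m)) (M : Theory.ModelType.{u, v, w} T)
    (a : ℕ → Fin m → M) (b : ℕ → Fin p → M),
    IsIndiscernibleSeq L a ∧
    (∀ (x : Fin p → M) (y : Fin m → M),
      ¬ (φ.Realize (Sum.elim x y) ∧ ψ.Realize (Sum.elim x y))) ∧
    (∀ i j : ℕ, i ≤ j → φ.Realize (Sum.elim (b j) (a i))) ∧
    (∀ i j : ℕ, j < i → ψ.Realize (Sum.elim (b j) (a i))) ∧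
    (∀ i j : ℕ, i < j →
      ¬ ∃ x : Fin p → M, φ.Realize (Sum.elim x (a j)) ∧ ψ.Realize (Sum.elim x (a i)))

/-- `T` has SOP₂: there are a formula `φ(x̄,ȳ)` and tuples `ā_η`, `η ∈ 2^{<ω}`, in a
(monster) model of `T` such that (a) for every `η ∈ 2^ω` the set
`{φ(x̄, ā_{η↾n}) : n < ω}` is consistent (here: finitely satisfiable), and (b) for
incomparable `η, ν`, `{φ(x̄, ā_η), φ(x̄, ā_ν)}` is inconsistent. -/
def HasSOP2 (T : L.Theory) : Prop :=
  ∃ (p m : ℕ) (φ : L.Formula (Fin p ⊕ Fin m)) (M : Theory.ModelType.{u, v, w} T)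
    (a : List (Fin 2) → Fin m → M),
    (∀ η : ℕ → Fin 2, ∀ N : ℕ, ∃ x : Fin p → M,
      ∀ k < N, φ.Realize (Sum.elim x (a (restr η k)))) ∧
    (∀ η ν : List (Fin 2), ¬ η <+: ν → ¬ ν <+: η →
      ¬ ∃ x : Fin p → M, φ.Realize (Sum.elim x (a η)) ∧ φ.Realize (Sum.elim x (a ν)))

/-!
An ultrapower stretches the sequence `(āᵢ, b̄ᵢ)` along the rationals: `A q := [n ↦ ā_{⌊n q⌋}]`,
`B q := [n ↦ b̄_{⌊n q⌋}]`. Since `⌊n q⌋` is monotone in `q` and, for `0 ≤ q' < q`, eventually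
`⌊n q'⌋ < ⌊n q⌋`, the SOP₃ pattern survives: `φ(B q', A q)` for `q ≤ q'`, `ψ(B q', A q)` for
`0 ≤ q' < q`, and `{φ(x̄, A q'), ψ(x̄, A q)}` is inconsistent for `q ≤ q'`.

Now code a node `η ∈ 2^{<ω}` by its dyadic interval `[l_η, r_η] ⊆ [0, 1]` and put
`χ(x̄; ȳ₁ȳ₂) := φ(x̄, ȳ₁) ∧ ψ(x̄, ȳ₂)`, `ā_η := (A l_η, A r_η)`. Along a branch the intervals are
nested, so `B l_{η↾N}` satisfies `χ(x̄, ā_{η↾k})` for all `k < N`; incomparable nodes have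
intervals with `r_η ≤ l_ν` (or vice versa), and then `χ(x̄, ā_η) ∧ χ(x̄, ā_ν)` contains
`ψ(x̄, A r_η) ∧ φ(x̄, A l_ν)`, which is inconsistent.
-/

section Dyadic

def dyadicLeft : List (Fin 2) → ℚ
  | [] => 0
  | b :: η => (b + dyadicLeft η) / 2

def dyadicRight : List (Fin 2) → ℚ
  | [] => 1
  | b :: η => (b + dyadicRight η) / 2

lemma dyadicLeft_nonneg : ∀ η, 0 ≤ dyadicLeft η
  | [] => le_rfl
  | b :: η => by
    have := dyadicLeft_nonneg η
    simp only [dyadicLeft]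
    positivity

lemma dyadicRight_le_one : ∀ η, dyadicRight η ≤ 1
  | [] => le_rfl
  | b :: η => by
    have := dyadicRight_le_one η
    have : (b : ℚ) ≤ 1 := by exact_mod_cast Fin.le_last b
    simp only [dyadicRight]
    linarith

lemma dyadicLeft_lt_dyadicRight : ∀ η, dyadicLeft η < dyadicRight η
  | [] => zero_lt_one
  | b :: η => by
    have := dyadicLeft_lt_dyadicRight η
    simp only [dyadicLeft, dyadicRight]
    linarith

lemma dyadicLeft_le_of_prefix {η ν : List (Fin 2)} (h : η <+: ν) :
    dyadicLeft η ≤ dyadicLeft ν := by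
  obtain ⟨τ, rfl⟩ := h
  induction η with
  | nil => exact dyadicLeft_nonneg τ
  | cons b η ih => simp only [List.cons_append, dyadicLeft]; linarith

lemma dyadicRight_le_of_prefix {η ν : List (Fin 2)} (h : η <+: ν) :
    dyadicRight ν ≤ dyadicRight η := by
  obtain ⟨τ, rfl⟩ := h
  induction η with
  | nil => exact dyadicRight_le_one τ
  | cons b η ih => simp only [List.cons_append, dyadicRight]; linarith

lemma dyadicRight_le_dyadicLeft_of_not_prefix :
    ∀ {η ν : List (Fin 2)}, ¬η <+: ν → ¬ν <+: η →
      dyadicRight η ≤ dyadicLeft ν ∨ dyadicRight ν ≤ dyadicLeft η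
  | [], _, h, _ => absurd List.nil_prefix h
  | _, [], _, h => absurd List.nil_prefix h
  | b :: η, c :: ν, h₁, h₂ => by
    simp only [List.cons_prefix_cons, not_and] at h₁ h₂
    simp only [dyadicLeft, dyadicRight]
    by_cases hbc : b = c
    · subst hbc
      rcases dyadicRight_le_dyadicLeft_of_not_prefix (h₁ rfl) (h₂ rfl) with h | h
      · left; linarith
      · right; linarith
    · obtain ⟨rfl, rfl⟩ | ⟨rfl, rfl⟩ : b = 0 ∧ c = 1 ∨ b = 1 ∧ c = 0 := by omega
      · left; norm_num; linarith [dyadicRight_le_one η, dyadicLeft_nonneg ν]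
      · right; norm_num; linarith [dyadicRight_le_one ν, dyadicLeft_nonneg η]

lemma restr_prefix_restr (η : ℕ → Fin 2) {k N : ℕ} (h : k ≤ N) : restr η k <+: restr η N := by
  obtain ⟨d, rfl⟩ := Nat.exists_eq_add_of_le h
  rw [restr, restr, List.ofFn_add]
  exact List.prefix_append _ _

end Dyadic

section Pairing

variable {α : Type*} {m n : ℕ}

def Formula.pairConj (φ : L.Formula (α ⊕ Fin m)) (ψ : L.Formula (α ⊕ Fin n)) :
    L.Formula (α ⊕ Fin (m + n)) :=
  φ.relabel (Sum.map id (Fin.castAdd n)) ⊓ ψ.relabel (Sum.map id (Fin.natAdd m))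

lemma Formula.realize_pairConj {M : Type*} [L.Structure M] (φ : L.Formula (α ⊕ Fin m))
    (ψ : L.Formula (α ⊕ Fin n)) (x : α → M) (y : Fin m → M) (z : Fin n → M) :
    (pairConj φ ψ).Realize (Sum.elim x (Fin.append y z)) ↔
      φ.Realize (Sum.elim x y) ∧ ψ.Realize (Sum.elim x z) := by
  have hy : Sum.elim x (Fin.append y z) ∘ Sum.map id (Fin.castAdd n) = Sum.elim x y := by
    funext q; cases q <;> simp
  have hz : Sum.elim x (Fin.append y z) ∘ Sum.map id (Fin.natAdd m) = Sum.elim x z := by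
    funext q; cases q <;> simp
  rw [pairConj, Formula.realize_inf, Formula.realize_relabel, Formula.realize_relabel, hy, hz]

end Pairing

theorem hasSOP2_of_rat_indexed {T : L.Theory} {M : Type w} [L.Structure M] [M ⊨ T] [Nonempty M]
    {p m : ℕ} (φ ψ : L.Formula (Fin p ⊕ Fin m)) (A : ℚ → Fin m → M) (B : ℚ → Fin p → M)
    (hφ : ∀ q q', q ≤ q' → φ.Realize (Sum.elim (B q') (A q)))
    (hψ : ∀ q q', 0 ≤ q' → q' < q → ψ.Realize (Sum.elim (B q') (A q)))
    (hφψ : ∀ q q', q ≤ q' → ¬∃ x, φ.Realize (Sum.elim x (A q')) ∧ ψ.Realize (Sum.elim x (A q))) :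
    HasSOP2.{u, v, w} T := by
  refine ⟨p, m + m, Formula.pairConj φ ψ, .of T M,
    fun η => Fin.append (A (dyadicLeft η)) (A (dyadicRight η)), fun η N => ?_, ?_⟩
  · refine ⟨B (dyadicLeft (restr η N)), fun k hk => ?_⟩
    have hpre := restr_prefix_restr η hk.le
    refine (Formula.realize_pairConj φ ψ _ _ _).2 ⟨hφ _ _ (dyadicLeft_le_of_prefix hpre), ?_⟩
    exact hψ _ _ (dyadicLeft_nonneg _)
      ((dyadicLeft_lt_dyadicRight _).trans_le (dyadicRight_le_of_prefix hpre))
  · rintro η ν h₁ h₂ ⟨x, hη, hν⟩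
    replace hη := (Formula.realize_pairConj φ ψ x _ _).1 hη
    replace hν := (Formula.realize_pairConj φ ψ x _ _).1 hν
    rcases dyadicRight_le_dyadicLeft_of_not_prefix h₁ h₂ with h | h
    · exact hφψ _ _ h ⟨x, hν.1, hη.2⟩
    · exact hφψ _ _ h ⟨x, hη.1, hν.2⟩

section Ultrapower

variable {M : Type w} [L.Structure M] {ι : Type*} (U : Ultrafilter ι)

lemma realize_sumElim_cast_iff [Nonempty M] {α β : Type*} (θ : L.Formula (α ⊕ β))
    (x : α → ι → M) (y : β → ι → M) :
    θ.Realize (Sum.elim (fun i => (x i : (U : Filter ι).Product fun _ => M))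
        fun j => (y j : (U : Filter ι).Product fun _ => M)) ↔
      ∀ᶠ n in (U : Filter ι), θ.Realize (Sum.elim (fun i => x i n) fun j => y j n) := by
  have hcast : Sum.elim (fun i => (x i : (U : Filter ι).Product fun _ => M))
      (fun j => (y j : (U : Filter ι).Product fun _ => M)) =
      fun q => ((Sum.elim x y q : ι → M) : (U : Filter ι).Product fun _ => M) := by
    funext q; cases q <;> rfl
  rw [hcast, Ultraproduct.realize_formula_cast]
  congr! with n q
  cases q <;> rfl

lemma exists_eq_cast {α : Type*} (x : α → (U : Filter ι).Product fun _ => M) :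
    ∃ x' : α → ι → M, x = fun i => (x' i : (U : Filter ι).Product fun _ => M) := by
  choose x' hx' using fun i => Quotient.exists_rep (x i)
  exact ⟨x', funext fun i => (hx' i).symm⟩

instance [Nonempty M] {T : L.Theory} [M ⊨ T] :
    (U : Filter ι).Product (fun _ => M) ⊨ T :=
  ⟨fun _ hφ => (Ultraproduct.sentence_realize _).2
    (Filter.Eventually.of_forall fun _ => Theory.realize_sentence_of_mem _ hφ)⟩

end Ultrapower

section Stretch

open Filter

lemma eventually_natFloor_mul_lt {q q' : ℚ} (hq' : 0 ≤ q') (h : q' < q) :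
    ∀ᶠ n : ℕ in atTop, ⌊n * q'⌋₊ < ⌊n * q⌋₊ := by
  obtain ⟨N, hN⟩ := exists_nat_gt (1 / (q - q'))
  rw [div_lt_iff₀ (sub_pos.2 h)] at hN
  filter_upwards [eventually_ge_atTop N] with n hn
  have hgap : n * q' + 1 ≤ n * q := by
    have : (N : ℚ) * (q - q') ≤ n * (q - q') := by gcongr
    linarith
  rw [Nat.lt_iff_add_one_le, ← Nat.floor_add_one (by positivity)]
  exact Nat.floor_le_floor hgap

abbrev Ultrapower (M : Type w) : Type w := (hyperfilter ℕ : Filter ℕ).Product fun _ => M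

variable {M : Type w} [L.Structure M] {α β : Type*}

noncomputable def stretch (a : ℕ → β → M) (q : ℚ) : β → Ultrapower M :=
  fun i => ((fun n : ℕ => a ⌊n * q⌋₊ i : ℕ → M) : Ultrapower M)

variable [Nonempty M] {φ : L.Formula (α ⊕ β)} {a : ℕ → β → M} {b : ℕ → α → M} {q q' : ℚ}

lemma realize_stretch_of_le (hφ : ∀ i j, i ≤ j → φ.Realize (Sum.elim (b j) (a i)))
    (h : q ≤ q') : φ.Realize (Sum.elim (stretch b q') (stretch a q)) :=
  (realize_sumElim_cast_iff _ φ _ _).2 <|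
    .of_forall fun _ => hφ _ _ (Nat.floor_le_floor (by gcongr))

lemma realize_stretch_of_lt (hφ : ∀ i j, j < i → φ.Realize (Sum.elim (b j) (a i)))
    (hq' : 0 ≤ q') (h : q' < q) : φ.Realize (Sum.elim (stretch b q') (stretch a q)) :=
  (realize_sumElim_cast_iff _ φ _ _).2 <|
    ((eventually_natFloor_mul_lt hq' h).filter_mono Nat.hyperfilter_le_atTop).mono
      fun _ hn => hφ _ _ hn

lemma not_exists_realize_stretch {ψ : L.Formula (α ⊕ β)}
    (hφψ : ∀ i j, i ≤ j → ¬∃ x, φ.Realize (Sum.elim x (a j)) ∧ ψ.Realize (Sum.elim x (a i)))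
    (h : q ≤ q') :
    ¬∃ x, φ.Realize (Sum.elim x (stretch a q')) ∧ ψ.Realize (Sum.elim x (stretch a q)) := by
  rintro ⟨x, hφx, hψx⟩
  obtain ⟨x, rfl⟩ := exists_eq_cast _ x
  replace hφx := (realize_sumElim_cast_iff _ φ _ _).1 hφx
  replace hψx := (realize_sumElim_cast_iff _ ψ _ _).1 hψx
  obtain ⟨n, hφn, hψn⟩ := (hφx.and hψx).exists
  exact hφψ _ _ (Nat.floor_le_floor (by gcongr)) ⟨_, hφn, hψn⟩

end Stretch

theorem hasSOP2_of_hasSOP3_general (T : L.Theory) :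
    HasSOP3.{u, v, w} T → HasSOP2.{u, v, w} T := by
  rintro ⟨p, m, φ, ψ, M, a, b, -, hcontra, hφ, hψ, hopp⟩
  have hφψ : ∀ i j, i ≤ j → ¬∃ x, φ.Realize (Sum.elim x (a j)) ∧ ψ.Realize (Sum.elim x (a i)) :=
    fun i j hij => hij.lt_or_eq.elim (hopp i j) (by rintro rfl ⟨x, h⟩; exact hcontra x _ h)
  exact hasSOP2_of_rat_indexed φ ψ (stretch a) (stretch b)
    (fun _ _ => realize_stretch_of_le hφ) (fun _ _ => realize_stretch_of_lt hψ)
    (fun _ _ => not_exists_realize_stretch hφψ)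

/-- If a complete first-order theory `T` has SOP₃, then `T` has SOP₂. -/
theorem hasSOP2_of_hasSOP3 (T : L.Theory) (hT : T.IsComplete) :
    HasSOP3.{u, v, w} T → HasSOP2.{u, v, w} T :=
  hasSOP2_of_hasSOP3_general T

end Sh692
end

section
/- If the formula φ(x̄,ȳ) exemplifies SOP₁ for the theory T (witnessed by tuples ā_η, η ∈ 2^{<ω}), then defining b̄_η := ā_{η⌢⟨1⟩} for η ∈ 2^{<ω}, the formula φ together with the family (b̄_η) exemplifies SOP₁′: (a) for every η ∈ 2^ω the set {φ(x̄, b̄_{η↾n})^{η(n)} : n < ω} is consistent, where φ¹ = φ and φ⁰ = ¬φ; and (b) if ν⌢⟨0⟩ ⊴ η then {φ(x̄, b̄_η), φ(x̄, b̄_ν)} is inconsistent. -/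
open FirstOrder FirstOrder.Language

universe u v w

namespace Sh692

variable {L : FirstOrder.Language.{u, v}}

theorem restr_succ (η : ℕ → Fin 2) (k : ℕ) : restr η (k + 1) = restr η k ++ [η k] := by
  rw [restr, restr, List.ofFn_succ', List.concat_eq_append]
  rfl

section

variable {M : Type w} [L.Structure M] {p m : ℕ} {φ : L.Formula (Fin p ⊕ Fin m)}
  {a : List (Fin 2) → Fin m → M}

/-- For `η k = 1` the two instances of `φ` coincide; for `η k = 0` they are inconsistent by
`hinc` with `ν = η↾k`. -/
theorem realize_branch_of_realize_restr_succ
    (hinc : ∀ ν η : List (Fin 2), ν ++ [(0 : Fin 2)] <+: η →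
      ¬ ∃ x : Fin p → M,
        φ.Realize (Sum.elim x (a η)) ∧ φ.Realize (Sum.elim x (a (ν ++ [(1 : Fin 2)]))))
    {η : ℕ → Fin 2} {k : ℕ} {x : Fin p → M}
    (hx : φ.Realize (Sum.elim x (a (restr η (k + 1))))) :
    if η k = 1 then φ.Realize (Sum.elim x (a (restr η k ++ [1])))
      else ¬ φ.Realize (Sum.elim x (a (restr η k ++ [1]))) := by
  rw [restr_succ] at hx
  split_ifs with hηk
  · rwa [hηk] at hx
  · have hηk : η k = 0 := by omega
    rw [hηk] at hx
    exact fun h => hinc _ _ List.prefix_rfl ⟨x, hx, h⟩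

end

theorem sop1_witnesses_give_sop1'_general (T : L.Theory)
    {p m : ℕ} (φ : L.Formula (Fin p ⊕ Fin m)) (M : Theory.ModelType.{u, v, w} T)
    (a : List (Fin 2) → Fin m → M)
    (hcons : ∀ η : ℕ → Fin 2, ∀ N : ℕ, ∃ x : Fin p → M,
      ∀ k < N, φ.Realize (Sum.elim x (a (restr η k))))
    (hinc : ∀ ν η : List (Fin 2), ν ++ [(0 : Fin 2)] <+: η →
      ¬ ∃ x : Fin p → M,
        φ.Realize (Sum.elim x (a η)) ∧ φ.Realize (Sum.elim x (a (ν ++ [(1 : Fin 2)]))))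
    (b : List (Fin 2) → Fin m → M) (hb : ∀ η, b η = a (η ++ [(1 : Fin 2)])) :
    (∀ η : ℕ → Fin 2, ∀ N : ℕ, ∃ x : Fin p → M, ∀ k < N,
      (if η k = (1 : Fin 2) then φ.Realize (Sum.elim x (b (restr η k)))
        else ¬ φ.Realize (Sum.elim x (b (restr η k))))) ∧
    (∀ ν η : List (Fin 2), ν ++ [(0 : Fin 2)] <+: η →
      ¬ ∃ x : Fin p → M,
        φ.Realize (Sum.elim x (b η)) ∧ φ.Realize (Sum.elim x (b ν))) := by
  simp only [hb]
  refine ⟨fun η N => ?_, fun ν η hνη => ?_⟩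
  · obtain ⟨x, hx⟩ := hcons η (N + 1)
    exact ⟨x, fun k hk => realize_branch_of_realize_restr_succ hinc (hx (k + 1) (by omega))⟩
  · exact hinc ν (η ++ [1]) (hνη.trans (List.prefix_append η [1]))

/-- If `φ(x̄,ȳ)` exemplifies SOP₁ for `T` (witnessed by `(ā_η)_{η ∈ 2^{<ω}}` in a model
`M` of `T`), then with `b̄_η := ā_{η⌢⟨1⟩}` the formula `φ` together with `(b̄_η)`
exemplifies SOP₁′: (a) for every `η ∈ 2^ω`, `{φ(x̄, b̄_{η↾n})^{η(n)} : n < ω}` is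
consistent (finitely satisfiable), where `φ¹ = φ`, `φ⁰ = ¬φ`; and (b) if `ν⌢⟨0⟩ ⊴ η`
then `{φ(x̄, b̄_η), φ(x̄, b̄_ν)}` is inconsistent. -/
theorem sop1_witnesses_give_sop1' (T : L.Theory) (hT : T.IsComplete)
    {p m : ℕ} (φ : L.Formula (Fin p ⊕ Fin m)) (M : Theory.ModelType.{u, v, w} T)
    (a : List (Fin 2) → Fin m → M)
    (hcons : ∀ η : ℕ → Fin 2, ∀ N : ℕ, ∃ x : Fin p → M,
      ∀ k < N, φ.Realize (Sum.elim x (a (restr η k))))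
    (hinc : ∀ ν η : List (Fin 2), ν ++ [(0 : Fin 2)] <+: η →
      ¬ ∃ x : Fin p → M,
        φ.Realize (Sum.elim x (a η)) ∧ φ.Realize (Sum.elim x (a (ν ++ [(1 : Fin 2)]))))
    (b : List (Fin 2) → Fin m → M) (hb : ∀ η, b η = a (η ++ [(1 : Fin 2)])) :
    (∀ η : ℕ → Fin 2, ∀ N : ℕ, ∃ x : Fin p → M, ∀ k < N,
      (if η k = (1 : Fin 2) then φ.Realize (Sum.elim x (b (restr η k)))
        else ¬ φ.Realize (Sum.elim x (b (restr η k))))) ∧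
    (∀ ν η : List (Fin 2), ν ++ [(0 : Fin 2)] <+: η →
      ¬ ∃ x : Fin p → M,
        φ.Realize (Sum.elim x (b η)) ∧ φ.Realize (Sum.elim x (b ν))) :=
  sop1_witnesses_give_sop1'_general T φ M a hcons hinc b hb

end Sh692
end

section
/- If a complete first-order theory T satisfies SOP₁, then T is not simple; in fact, any formula φ(x̄,ȳ) exemplifying SOP₁ also exemplifies the tree property of T. -/
open FirstOrder FirstOrder.Language

universe u v w

namespace Sh692

variable {L : FirstOrder.Language.{u, v}}

/-- The restriction `ν↾k` of an element of `ω^ω`, as a finite sequence. -/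
def restrNat (ν : ℕ → ℕ) (k : ℕ) : List ℕ := List.ofFn fun i : Fin k => ν i

/-- `T` has the tree property: there are a formula `φ(x̄,ȳ)` and tuples `b̄_ν`,
`ν ∈ ω^{<ω}`, in a (monster) model of `T` such that for each `ν ∈ ω^{<ω}` the formulas
`{φ(x̄, b̄_{ν⌢⟨k⟩}) : k < ω}` are pairwise inconsistent, while for each `ν ∈ ω^ω` the set
`{φ(x̄, b̄_{ν↾n}) : n < ω}` is consistent (finitely satisfiable). -/
def HasTreeProperty (T : L.Theory) : Prop :=
  ∃ (p m : ℕ) (φ : L.Formula (Fin p ⊕ Fin m)) (M : Theory.ModelType.{u, v, w} T)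
    (b : List ℕ → Fin m → M),
    (∀ (ν : List ℕ) (k₁ k₂ : ℕ), k₁ ≠ k₂ →
      ¬ ∃ x : Fin p → M,
        φ.Realize (Sum.elim x (b (ν ++ [k₁]))) ∧ φ.Realize (Sum.elim x (b (ν ++ [k₂])))) ∧
    (∀ ν : ℕ → ℕ, ∀ N : ℕ, ∃ x : Fin p → M,
      ∀ k < N, φ.Realize (Sum.elim x (b (restrNat ν k))))

/-- `T` is simple iff no formula has the tree property. -/
def IsSimple (T : L.Theory) : Prop := ¬ HasTreeProperty.{u, v, w} T

/-!
The map `binaryCode : ⟨k₀,…,k_{n-1}⟩ ↦ 0^{k₀}⌢⟨1⟩⌢⋯⌢0^{k_{n-1}}⌢⟨1⟩` sends `ω^{<ω}` into `2^{<ω}`,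
preserving initial segments. Put `b̄_ν := ā_{binaryCode ν}`. For `k₁ < k₂`, the node
`binaryCode (ν⌢⟨k₂⟩)` extends `(binaryCode ν ⌢ 0^{k₁})⌢⟨0⟩` while
`binaryCode (ν⌢⟨k₁⟩) = (binaryCode ν ⌢ 0^{k₁})⌢⟨1⟩`, so SOP₁ makes `φ(x̄, b̄_{ν⌢⟨k₁⟩})` and
`φ(x̄, b̄_{ν⌢⟨k₂⟩})` inconsistent. The codes of the initial segments of a branch of `ω^ω` lie on
a single branch of `2^ω`, so consistency along branches transfers too.
-/

/-- The `i`-th entry of the branch through a chain `s 0 <+: s 1 <+: ⋯` of lists. -/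
def branch {α : Type*} (s : ℕ → List α) (d : α) (i : ℕ) : α := (s (i + 1)).getD i d

lemma ofFn_branch {α : Type*} (s : ℕ → List α) (d : α)
    (hchain : ∀ {i j}, i ≤ j → s i <+: s j) (hlen : ∀ i, i ≤ (s i).length) (k : ℕ) :
    List.ofFn (fun i : Fin (s k).length => branch s d i) = s k := by
  refine List.ext_getElem (by simp) fun i _ hik => ?_
  have hi : i < (s (i + 1)).length := hlen (i + 1)
  simp only [List.getElem_ofFn, branch, List.getD_eq_getElem _ _ hi]
  rcases le_total k (i + 1) with hk | hk
  · exact ((hchain hk).getElem hik).symm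
  · exact (hchain hk).getElem hi

def binaryCode (ν : List ℕ) : List (Fin 2) :=
  ν.flatMap fun k => List.replicate k 0 ++ [1]

lemma binaryCode_append (ν μ : List ℕ) : binaryCode (ν ++ μ) = binaryCode ν ++ binaryCode μ :=
  List.flatMap_append

lemma binaryCode_append_singleton (ν : List ℕ) (k : ℕ) :
    binaryCode (ν ++ [k]) = binaryCode ν ++ List.replicate k 0 ++ [1] := by
  simp [binaryCode]

lemma length_le_length_binaryCode (ν : List ℕ) : ν.length ≤ (binaryCode ν).length := by
  induction ν with
  | nil => simp
  | cons k ν ih => simp [binaryCode] at *; omega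

lemma binaryCode_prefix {ν μ : List ℕ} (h : ν <+: μ) : binaryCode ν <+: binaryCode μ := by
  obtain ⟨w, rfl⟩ := h
  rw [binaryCode_append]
  exact List.prefix_append _ _

lemma binaryCode_append_zero_prefix (ν : List ℕ) {k₁ k₂ : ℕ} (h : k₁ < k₂) :
    binaryCode ν ++ List.replicate k₁ 0 ++ [0] <+: binaryCode (ν ++ [k₂]) := by
  obtain ⟨d, rfl⟩ := Nat.exists_eq_add_of_lt h
  simp only [binaryCode_append_singleton, List.append_assoc]
  refine (List.prefix_append_right_inj _).mpr ⟨List.replicate d 0 ++ [1], ?_⟩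
  rw [show k₁ + d + 1 = k₁ + 1 + d by omega, List.replicate_add, List.replicate_succ']
  simp

lemma restrNat_succ (ν : ℕ → ℕ) (k : ℕ) : restrNat ν (k + 1) = restrNat ν k ++ [ν k] := by
  simp only [restrNat, List.ofFn_succ', List.concat_eq_append, Fin.val_castSucc, Fin.val_last]

lemma length_restrNat (ν : ℕ → ℕ) (k : ℕ) : (restrNat ν k).length = k := by
  simp [restrNat]

lemma restrNat_prefix (ν : ℕ → ℕ) {k k' : ℕ} (h : k ≤ k') : restrNat ν k <+: restrNat ν k' := by
  induction k', h using Nat.le_induction with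
  | base => exact List.prefix_refl _
  | succ n _ ih => exact ih.trans (restrNat_succ ν n ▸ List.prefix_append _ _)

lemma length_binaryCode_restrNat_lt (ν : ℕ → ℕ) {k N : ℕ} (h : k < N) :
    (binaryCode (restrNat ν k)).length < (binaryCode (restrNat ν N)).length := by
  have hstep : (binaryCode (restrNat ν k)).length < (binaryCode (restrNat ν (k + 1))).length := by
    simp [restrNat_succ, binaryCode_append_singleton]
  exact hstep.trans_le (binaryCode_prefix (restrNat_prefix ν h)).length_le

lemma restr_branch_binaryCode (ν : ℕ → ℕ) (k : ℕ) :
    restr (branch (fun k => binaryCode (restrNat ν k)) 0) (binaryCode (restrNat ν k)).length =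
      binaryCode (restrNat ν k) :=
  ofFn_branch _ 0 (fun h => binaryCode_prefix (restrNat_prefix ν h))
    (fun i => (length_restrNat ν i).ge.trans (length_le_length_binaryCode _)) k

section Transfer

variable {p m : ℕ} (φ : L.Formula (Fin p ⊕ Fin m)) {M : Type*} [L.Structure M]
  (a : List (Fin 2) → Fin m → M)

lemma pairwise_inconsistent_binaryCode
    (hinc : ∀ ν η : List (Fin 2), ν ++ [(0 : Fin 2)] <+: η →
      ¬ ∃ x : Fin p → M,
        φ.Realize (Sum.elim x (a η)) ∧ φ.Realize (Sum.elim x (a (ν ++ [(1 : Fin 2)]))))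
    (ν : List ℕ) (k₁ k₂ : ℕ) (hk : k₁ ≠ k₂) :
    ¬ ∃ x : Fin p → M, φ.Realize (Sum.elim x (a (binaryCode (ν ++ [k₁])))) ∧
      φ.Realize (Sum.elim x (a (binaryCode (ν ++ [k₂])))) := by
  have hlt : ∀ {i j : ℕ}, i < j → ¬ ∃ x : Fin p → M,
      φ.Realize (Sum.elim x (a (binaryCode (ν ++ [j])))) ∧
        φ.Realize (Sum.elim x (a (binaryCode (ν ++ [i])))) := fun {i j} h => by
    simpa only [binaryCode_append_singleton] using
      hinc _ _ (binaryCode_append_zero_prefix ν h)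
  rintro ⟨x, h₁, h₂⟩
  rcases hk.lt_or_gt with h | h
  · exact hlt h ⟨x, h₂, h₁⟩
  · exact hlt h ⟨x, h₁, h₂⟩

lemma consistent_binaryCode
    (hcons : ∀ η : ℕ → Fin 2, ∀ N : ℕ, ∃ x : Fin p → M,
      ∀ k < N, φ.Realize (Sum.elim x (a (restr η k))))
    (ν : ℕ → ℕ) (N : ℕ) :
    ∃ x : Fin p → M, ∀ k < N, φ.Realize (Sum.elim x (a (binaryCode (restrNat ν k)))) := by
  obtain ⟨x, hx⟩ :=
    hcons (branch (fun k => binaryCode (restrNat ν k)) 0) (binaryCode (restrNat ν N)).length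
  refine ⟨x, fun k hk => ?_⟩
  rw [← restr_branch_binaryCode ν k]
  exact hx _ (length_binaryCode_restrNat_lt ν hk)

lemma exists_tree_of_sop1
    (hcons : ∀ η : ℕ → Fin 2, ∀ N : ℕ, ∃ x : Fin p → M,
      ∀ k < N, φ.Realize (Sum.elim x (a (restr η k))))
    (hinc : ∀ ν η : List (Fin 2), ν ++ [(0 : Fin 2)] <+: η →
      ¬ ∃ x : Fin p → M,
        φ.Realize (Sum.elim x (a η)) ∧ φ.Realize (Sum.elim x (a (ν ++ [(1 : Fin 2)])))) :
    ∃ b : List ℕ → Fin m → M,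
      (∀ (ν : List ℕ) (k₁ k₂ : ℕ), k₁ ≠ k₂ →
        ¬ ∃ x : Fin p → M,
          φ.Realize (Sum.elim x (b (ν ++ [k₁]))) ∧ φ.Realize (Sum.elim x (b (ν ++ [k₂])))) ∧
      (∀ ν : ℕ → ℕ, ∀ N : ℕ, ∃ x : Fin p → M,
        ∀ k < N, φ.Realize (Sum.elim x (b (restrNat ν k)))) :=
  ⟨fun ν => a (binaryCode ν), pairwise_inconsistent_binaryCode φ a hinc,
    consistent_binaryCode φ a hcons⟩

end Transfer

theorem not_simple_of_sop1_general (T : L.Theory)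
    {p m : ℕ} (φ : L.Formula (Fin p ⊕ Fin m)) (M : Theory.ModelType.{u, v, w} T)
    (a : List (Fin 2) → Fin m → M)
    (hcons : ∀ η : ℕ → Fin 2, ∀ N : ℕ, ∃ x : Fin p → M,
      ∀ k < N, φ.Realize (Sum.elim x (a (restr η k))))
    (hinc : ∀ ν η : List (Fin 2), ν ++ [(0 : Fin 2)] <+: η →
      ¬ ∃ x : Fin p → M,
        φ.Realize (Sum.elim x (a η)) ∧ φ.Realize (Sum.elim x (a (ν ++ [(1 : Fin 2)])))) :
    (∃ b : List ℕ → Fin m → M,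
      (∀ (ν : List ℕ) (k₁ k₂ : ℕ), k₁ ≠ k₂ →
        ¬ ∃ x : Fin p → M,
          φ.Realize (Sum.elim x (b (ν ++ [k₁]))) ∧
            φ.Realize (Sum.elim x (b (ν ++ [k₂])))) ∧
      (∀ ν : ℕ → ℕ, ∀ N : ℕ, ∃ x : Fin p → M,
        ∀ k < N, φ.Realize (Sum.elim x (b (restrNat ν k))))) ∧
    ¬ IsSimple.{u, v, w} T := by
  have htree := exists_tree_of_sop1 φ a hcons hinc
  exact ⟨htree, fun hsimple => hsimple ⟨p, m, φ, M, htree⟩⟩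

/-- If `T` satisfies SOP₁ then `T` is not simple; in fact, if `φ(x̄,ȳ)` exemplifies SOP₁
of `T` (with witnesses `(ā_η)` in a model `M`), then the same formula `φ` exemplifies the
tree property of `T`. -/
theorem not_simple_of_sop1 (T : L.Theory) (hT : T.IsComplete)
    {p m : ℕ} (φ : L.Formula (Fin p ⊕ Fin m)) (M : Theory.ModelType.{u, v, w} T)
    (a : List (Fin 2) → Fin m → M)
    (hcons : ∀ η : ℕ → Fin 2, ∀ N : ℕ, ∃ x : Fin p → M,
      ∀ k < N, φ.Realize (Sum.elim x (a (restr η k))))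
    (hinc : ∀ ν η : List (Fin 2), ν ++ [(0 : Fin 2)] <+: η →
      ¬ ∃ x : Fin p → M,
        φ.Realize (Sum.elim x (a η)) ∧ φ.Realize (Sum.elim x (a (ν ++ [(1 : Fin 2)])))) :
    (∃ b : List ℕ → Fin m → M,
      (∀ (ν : List ℕ) (k₁ k₂ : ℕ), k₁ ≠ k₂ →
        ¬ ∃ x : Fin p → M,
          φ.Realize (Sum.elim x (b (ν ++ [k₁]))) ∧
            φ.Realize (Sum.elim x (b (ν ++ [k₂])))) ∧
      (∀ ν : ℕ → ℕ, ∀ N : ℕ, ∃ x : Fin p → M,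
        ∀ k < N, φ.Realize (Sum.elim x (b (restrNat ν k))))) ∧
    ¬ IsSimple.{u, v, w} T :=
  not_simple_of_sop1_general T φ M a hcons hinc

end Sh692
end

section
/- For all natural numbers n ≥ 1 and l, there exists m such that for every function f : (Fin m)^n → Fin n there exist j < n, a sequence σ ∈ (Fin m)^j, pairwise distinct k₀,…,k_l < m, and sequences ρ₀,…,ρ_l ∈ (Fin m)^n such that for each s ≤ l: σ ⌢ ⟨k_s⟩ is an initial segment of ρ_s, and f(ρ_s) = j. -/
/-!
Already `m = l + 1` works, with `k` the identity: it suffices to find a level `j` and a node `σ`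
at that level all of whose children carry a leaf of colour `j` below them. If there were none,
descend from the root choosing at each level `j` a child with no leaf of colour `j` below it;
the leaf reached at level `n` then has no colour at all.
-/

variable {α : Type*} {n : ℕ}

def ColourOccursBelow (f : List α → Fin n) (c : Fin n) (σ : List α) : Prop :=
  ∃ ρ : List α, ρ.length = n ∧ σ <+: ρ ∧ f ρ = c

theorem ColourOccursBelow.of_isPrefix {f : List α → Fin n} {c : Fin n} {σ τ : List α}
    (hστ : σ <+: τ) (h : ColourOccursBelow f c τ) : ColourOccursBelow f c σ :=
  let ⟨ρ, hlen, hτρ, hc⟩ := h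
  ⟨ρ, hlen, hστ.trans hτρ, hc⟩

theorem exists_path_avoiding_colours {f : List α → Fin n}
    (h : ∀ (j : Fin n) (σ : List α), σ.length = j → ∃ a, ¬ColourOccursBelow f j (σ ++ [a]))
    {d : ℕ} (hd : d ≤ n) :
    ∃ σ : List α, σ.length = d ∧ ∀ c : Fin n, (c : ℕ) < d → ¬ColourOccursBelow f c σ := by
  induction d with
  | zero => exact ⟨[], rfl, fun c hc => absurd hc (Nat.not_lt_zero _)⟩
  | succ d ih =>
    obtain ⟨σ, hlen, havoid⟩ := ih (Nat.le_of_succ_le hd)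
    obtain ⟨a, ha⟩ := h ⟨d, hd⟩ σ hlen
    refine ⟨σ ++ [a], by simp [hlen], fun c hc hbelow => ?_⟩
    rcases Nat.lt_succ_iff_lt_or_eq.mp hc with hcd | rfl
    · exact havoid c hcd (hbelow.of_isPrefix (List.prefix_append σ [a]))
    · exact ha hbelow

theorem exists_forall_colourOccursBelow_append_singleton (f : List α → Fin n) :
    ∃ (j : Fin n) (σ : List α), σ.length = j ∧ ∀ a, ColourOccursBelow f j (σ ++ [a]) := by
  by_contra! h
  obtain ⟨σ, hlen, havoid⟩ := exists_path_avoiding_colours h le_rfl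
  exact havoid (f σ) (hlen ▸ (f σ).isLt) ⟨σ, hlen, List.prefix_refl σ, rfl⟩

theorem subtree_pigeonhole_general (n l : ℕ) :
    ∃ m : ℕ, ∀ f : List (Fin m) → Fin n,
      ∃ (j : Fin n) (σ : List (Fin m)) (k : Fin (l + 1) → Fin m)
        (ρ : Fin (l + 1) → List (Fin m)),
        σ.length = (j : ℕ) ∧ Function.Injective k ∧
        ∀ s : Fin (l + 1),
          (ρ s).length = n ∧ (σ ++ [k s]) <+: ρ s ∧ f (ρ s) = j := by
  refine ⟨l + 1, fun f => ?_⟩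
  obtain ⟨j, σ, hσ, hbelow⟩ := exists_forall_colourOccursBelow_append_singleton f
  choose ρ hρ using hbelow
  exact ⟨j, σ, id, ρ, hσ, Function.injective_id, hρ⟩

/-- Pigeonhole/subtree lemma: for all `n ≥ 1` and `l` there is `m` such that for every
colouring `f` of the length-`n` sequences over `Fin m` with `n` colours, there are a
colour `j < n`, a sequence `σ` of length `j`, pairwise distinct `k₀, …, k_l < m` and
length-`n` sequences `ρ₀, …, ρ_l` such that for each `s ≤ l`: `σ⌢⟨k_s⟩` is an initial
segment of `ρ_s` and `f(ρ_s) = j`. -/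
theorem subtree_pigeonhole (n l : ℕ) (hn : 1 ≤ n) :
    ∃ m : ℕ, ∀ f : List (Fin m) → Fin n,
      ∃ (j : Fin n) (σ : List (Fin m)) (k : Fin (l + 1) → Fin m)
        (ρ : Fin (l + 1) → List (Fin m)),
        σ.length = (j : ℕ) ∧ Function.Injective k ∧
        ∀ s : Fin (l + 1),
          (ρ s).length = n ∧ (σ ++ [k s]) <+: ρ s ∧ f (ρ s) = j :=
  subtree_pigeonhole_general n l
end

section
/- Suppose ν_η ∈ 2^{<ω₁} and finite sets w_η ⊆ 2^{<ω₁} are assigned to all η ∈ 2^{<ω₁} in such a way that: (ii) β < lg(η) implies ν_{η↾β} ◁ ν_η; (iv) every ρ ∈ w_η has lg(ρ) < lg(ν_η); (v) w_η = ∅ when lg(η) is a limit ordinal; and p_η := ⋃{w_{η↾γ} : γ ≤ lg(η)} (as an index set of formulas) satisfies: for each η there is a finite q_η ⊆ p_η (playing the role of a finite inconsistency witness). If moreover each p_η is countable, then there exist a finite set q and η* ∈ 2^{ω₁} such that for every η₁ ∈ 2^{<ω₁} extending some fixed initial segment of η* there is η₂ ⊵ η₁ with q_{η₂} = q. More precisely: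 it is impossible that for every η ∈ 2^{<ω₁} there is g(η) ⊵ η in 2^{<ω₁} such that for all η₁ ⊵ g(η), q_{η₁} ⊄ p_η. -/
/-!
Iterate the escape function `g` ω times from the empty sequence and let `η` be the union of
the resulting ⊴-chain `η₀ ⊴ η₁ ⊴ ⋯`; its length is countable because `ω₁` is regular. The
sets `p` grow along ⊴, and `p η = ⋃ₙ p ηₙ`: the only index not covered by some `ηₙ` is
`lg η` itself when it is a limit, and `w` vanishes there. Hence the finite set `q η ⊆ p η`
already lies in some `p ηₙ`, although `η ⊵ g ηₙ` was chosen so that this fails.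
-/

attribute [local instance] Classical.propDecidable

/-- A binary sequence of countable ordinal length, i.e. an element of `2^{<ω₁}`. -/
structure CSeq : Type 1 where
  len : Ordinal.{0}
  len_lt : len < (Cardinal.aleph 1).ord
  val : ∀ β : Ordinal.{0}, β < len → Fin 2

namespace CSeq

/-- `s ⊴ t`: `s` is an initial segment of `t`. -/
def le (s t : CSeq) : Prop :=
  ∃ h : s.len ≤ t.len, ∀ (β : Ordinal) (hβ : β < s.len), s.val β hβ = t.val β (hβ.trans_le h)

/-- `s ◁ t`: `s` is a proper initial segment of `t`. -/
def lt (s t : CSeq) : Prop := le s t ∧ s.len < t.len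

/-- The restriction `s↾γ`. -/
noncomputable def restrict (s : CSeq) (γ : Ordinal) : CSeq :=
  if h : γ ≤ s.len then ⟨γ, lt_of_le_of_lt h s.len_lt, fun β hβ => s.val β (hβ.trans_le h)⟩
  else s

end CSeq

open Order

namespace CSeq

instance : Preorder CSeq where
  le := CSeq.le
  le_refl _ := ⟨le_rfl, fun _ _ => rfl⟩
  le_trans _ _ _ := fun ⟨hst, hst'⟩ ⟨htu, htu'⟩ =>
    ⟨hst.trans htu, fun β hβ => (hst' β hβ).trans (htu' β (hβ.trans_le hst))⟩

theorem restrict_eq_of_le {s t : CSeq} (h : s ≤ t) {γ : Ordinal} (hγ : γ ≤ s.len) :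
    t.restrict γ = s.restrict γ := by
  obtain ⟨hlen, hval⟩ := h
  rw [restrict, restrict, dif_pos hγ, dif_pos (hγ.trans hlen)]
  congr 1
  funext β hβ
  exact (hval β (hβ.trans_le hγ)).symm

@[simp]
theorem restrict_len (s : CSeq) : s.restrict s.len = s := by
  rw [restrict, dif_pos le_rfl]

def empty : CSeq :=
  ⟨0, Cardinal.ord_pos.2 (Cardinal.aleph_pos 1), fun _ hβ => (not_lt_zero hβ).elim⟩

section Limit

variable (e : ℕ → CSeq)

theorem exists_lt_len_of_lt_iSup {β : Ordinal} (hβ : β < ⨆ n, (e n).len) :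
    ∃ n, β < (e n).len :=
  (lt_ciSup_iff Ordinal.bddAbove_of_small).1 hβ

/-- The union of `e`, meaningful when `e` is a ⊴-chain (`le_limit`); otherwise each position is
read off an arbitrary member long enough to contain it. -/
noncomputable def limit : CSeq where
  len := ⨆ n, (e n).len
  len_lt := Ordinal.iSup_lt_of_lt_cof (by
      rw [Cardinal.isRegular_aleph_one.cof_ord, Cardinal.mk_nat]
      exact Cardinal.aleph0_lt_aleph_one) fun n => (e n).len_lt
  val β hβ := (e (exists_lt_len_of_lt_iSup e hβ).choose).val β
    (exists_lt_len_of_lt_iSup e hβ).choose_spec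

variable {e}

theorem val_eq_of_monotone (he : Monotone e) {β : Ordinal} {m n : ℕ} (hm : β < (e m).len)
    (hn : β < (e n).len) : (e m).val β hm = (e n).val β hn := by
  rcases le_total m n with h | h
  · exact (he h).2 β hm
  · exact ((he h).2 β hn).symm

theorem le_limit (he : Monotone e) (n : ℕ) : e n ≤ limit e :=
  ⟨le_ciSup Ordinal.bddAbove_of_small n, fun _ _ => val_eq_of_monotone he _ _⟩

end Limit

section Accum

variable (w : CSeq → Set CSeq)

/-- `p_η = ⋃ {w_{η↾γ} : γ ≤ lg η}`. -/
def accum (η : CSeq) : Set CSeq := {a | ∃ γ ≤ η.len, a ∈ w (η.restrict γ)}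

variable {w}

theorem accum_mono : Monotone (accum w) := by
  rintro s t hst a ⟨γ, hγ, ha⟩
  exact ⟨γ, hγ.trans hst.1, by rwa [restrict_eq_of_le hst hγ]⟩

theorem accum_limit_subset (hw : ∀ η, IsSuccLimit η.len → w η = ∅) {e : ℕ → CSeq}
    (he : Monotone e) : accum w (limit e) ⊆ ⋃ n, accum w (e n) := by
  rintro a ⟨γ, hγ, ha⟩
  have mem_of_le : ∀ n, γ ≤ (e n).len → a ∈ ⋃ n, accum w (e n) := fun n hn =>
    Set.mem_iUnion.2 ⟨n, γ, hn, by rwa [← restrict_eq_of_le (le_limit he n) hn]⟩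
  obtain hγ | rfl := hγ.lt_or_eq
  · obtain ⟨n, hn⟩ := exists_lt_len_of_lt_iSup e hγ
    exact mem_of_le n hn.le
  · by_cases hlim : IsSuccLimit (limit e).len
    · rw [restrict_len, hw _ hlim] at ha
      exact ha.elim
    · obtain ⟨n, hn⟩ := exists_eq_ciSup_of_not_isSuccLimit Ordinal.bddAbove_of_small hlim
      exact mem_of_le n hn.ge

theorem exists_subset_accum_of_subset_accum_limit (hw : ∀ η, IsSuccLimit η.len → w η = ∅)
    {e : ℕ → CSeq} (he : Monotone e) {s : Set CSeq} (hs : s.Finite)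
    (hsub : s ⊆ accum w (limit e)) : ∃ n, s ⊆ accum w (e n) := by
  have hdir : Directed (· ⊆ ·) (accum w ∘ e) := (accum_mono.comp he).directed_le
  simpa using hdir.exists_mem_subset_of_finset_subset_biUnion
    (s := hs.toFinset) (by simpa using hsub.trans (accum_limit_subset hw he))

end Accum

end CSeq

open CSeq in
theorem no_uniform_escape_general
    (w : CSeq → Set CSeq)
    (hv : ∀ η, Order.IsSuccLimit η.len → w η = ∅)
    (p : CSeq → Set CSeq)
    (hp : ∀ η, p η = {a | ∃ γ ≤ η.len, a ∈ w (η.restrict γ)})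
    (q : CSeq → Set CSeq) (hqfin : ∀ η, (q η).Finite) (hq : ∀ η, q η ⊆ p η) :
    ¬ ∃ g : CSeq → CSeq, ∀ η : CSeq,
        η.le (g η) ∧ ∀ η₁ : CSeq, (g η).le η₁ → ¬ q η₁ ⊆ p η := by
  rintro ⟨g, hg⟩
  obtain rfl : p = accum w := funext hp
  let e : ℕ → CSeq := fun n => g^[n] empty
  have he_succ (n : ℕ) : e (n + 1) = g (e n) := Function.iterate_succ_apply' g n empty
  have he : Monotone e := monotone_nat_of_le_succ fun n => by
    rw [he_succ]
    exact (hg (e n)).1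
  obtain ⟨n, hn⟩ := exists_subset_accum_of_subset_accum_limit hv he (hqfin (limit e)) (hq _)
  refine (hg (e n)).2 (limit e) ?_ hn
  rw [← he_succ]
  exact le_limit he (n + 1)

/-- Suppose `ν_η ∈ 2^{<ω₁}` and finite `w_η ⊆ 2^{<ω₁}` are assigned to all `η ∈ 2^{<ω₁}`
with: (ii) `β < lg η` implies `ν_{η↾β} ◁ ν_η`; (iv) every `ρ ∈ w_η` has
`lg ρ < lg ν_η`; (v) `w_η = ∅` when `lg η` is a limit; and with
`p_η = ⋃ {w_{η↾γ} : γ ≤ lg η}`, each `η` has a finite `q_η ⊆ p_η`.  Then it is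
impossible that for every `η` there is `g(η) ⊵ η` such that for all `η₁ ⊵ g(η)`,
`q_{η₁} ⊄ p_η`. -/
theorem no_uniform_escape
    (ν : CSeq → CSeq) (w : CSeq → Set CSeq)
    (hwfin : ∀ η, (w η).Finite)
    (hii : ∀ (η : CSeq) (β : Ordinal), β < η.len → (ν (η.restrict β)).lt (ν η))
    (hiv : ∀ η, ∀ ρ ∈ w η, ρ.len < (ν η).len)
    (hv : ∀ η, Order.IsSuccLimit η.len → w η = ∅)
    (p : CSeq → Set CSeq)
    (hp : ∀ η, p η = {a | ∃ γ ≤ η.len, a ∈ w (η.restrict γ)})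
    (q : CSeq → Set CSeq) (hqfin : ∀ η, (q η).Finite) (hq : ∀ η, q η ⊆ p η) :
    ¬ ∃ g : CSeq → CSeq, ∀ η : CSeq,
        η.le (g η) ∧ ∀ η₁ : CSeq, (g η).le η₁ → ¬ q η₁ ⊆ p η :=
  no_uniform_escape_general w hv p hp q hqfin hq
end
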